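/- arXiv:2208.14120 — 2 statements merged into one kernel-verified Lean document; each statement's English description precedes it below -/
import Mathlib

section
/- Let d, m ≥ 1, l > 0, β > 0, B ∈ ℝ^{d×m}, ε > 0, and Ω̄ = [−l,l]^d. Let f : ℝ^d → ℝ^d and let v, v_ε : ℝ^d → ℝ be differentiable. Define F(y) = f(y) − (1/β) B Bᵀ ∇v(y) and F_ε(y) = f(y) − (1/β) B Bᵀ ∇v_ε(y). Assume F is Lipschitz on Ω̄ with constant L, assume |Bᵀ(∇v(y) − ∇v_ε(y))| ≤ ε for all y ∈ Ω̄, and set C = 2L + ‖B‖²/β², where ‖B‖ is the operator norm. Let T > 0 and let y, y_ε : [0,T] → Ω̄ be differentiable with y(0) = y_ε(0), y'(t) = F(y(t)) and y_ε'(t) = F_ε(y_ε(t)) for all t ∈ [0,T]. Then |y_ε(t) − y(t)|² ≤ (ε²/C)(e^{Ct} − 1) for all t ∈ [0,T]. -/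
open Matrix Set

open scoped RealInnerProductSpace

/-!
Write `z = yε - y`. Splitting `Fε(yε) - F(y) = (F(yε) - F(y)) + (Fε(yε) - F(yε))`, the first
term is controlled by the Lipschitz bound and the second by `‖B‖ ε / β`, so
`(‖z‖²)' = 2⟪z, z'⟫ ≤ 2L‖z‖² + 2(‖B‖ε/β)‖z‖ ≤ C‖z‖² + ε²` by AM-GM. Grönwall's inequality for the
scalar function `‖z‖²`, which vanishes at `0`, gives the bound.
-/

/-- The map `x ↦ Aᵀ x` from `ℝ^d` to `ℝ^m` induced by a matrix `A ∈ ℝ^{d×m}`,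
as a map of Euclidean spaces. -/
noncomputable def matVec {d m : ℕ} (A : Matrix (Fin d) (Fin m) ℝ) :
    EuclideanSpace ℝ (Fin m) → EuclideanSpace ℝ (Fin d) :=
  fun x => Matrix.toEuclideanLin A x

/-- The `ℓ²` operator norm of a matrix `A ∈ ℝ^{d×m}`. -/
noncomputable def matOpNorm {d m : ℕ} (A : Matrix (Fin d) (Fin m) ℝ) : ℝ :=
  ‖LinearMap.toContinuousLinearMap (Matrix.toEuclideanLin A)‖

theorem matOpNorm_nonneg {d m : ℕ} (A : Matrix (Fin d) (Fin m) ℝ) : 0 ≤ matOpNorm A :=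
  norm_nonneg _

theorem norm_matVec_le {d m : ℕ} (A : Matrix (Fin d) (Fin m) ℝ) (x : EuclideanSpace ℝ (Fin m)) :
    ‖matVec A x‖ ≤ matOpNorm A * ‖x‖ :=
  (LinearMap.toContinuousLinearMap (Matrix.toEuclideanLin A)).le_opNorm x

theorem norm_sub_sub_smul_matVec_le {d m : ℕ} (B : Matrix (Fin d) (Fin m) ℝ)
    (a : EuclideanSpace ℝ (Fin d)) (β : ℝ) (p q : EuclideanSpace ℝ (Fin m)) :
    ‖(a - β⁻¹ • matVec B q) - (a - β⁻¹ • matVec B p)‖ ≤ |β|⁻¹ * matOpNorm B * ‖p - q‖ := by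
  have h : (a - β⁻¹ • matVec B q) - (a - β⁻¹ • matVec B p) = β⁻¹ • matVec B (p - q) := by
    simp only [matVec, map_sub, smul_sub]
    abel
  rw [h, norm_smul, Real.norm_eq_abs, abs_inv, mul_assoc]
  gcongr
  exact norm_matVec_le B _

theorem le_gronwallBound_of_hasDerivWithinAt {f f' : ℝ → ℝ} {δ K ε a b : ℝ}
    (hf : ContinuousOn f (Icc a b)) (hf' : ∀ x ∈ Ico a b, HasDerivWithinAt f (f' x) (Ici x) x)
    (ha : f a ≤ δ) (bound : ∀ x ∈ Ico a b, f' x ≤ K * f x + ε) :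
    ∀ x ∈ Icc a b, f x ≤ gronwallBound δ K ε (x - a) :=
  le_gronwallBound_of_liminf_deriv_right_le hf
    (fun x hx _ hr => by simpa only [slope_def_field, div_eq_inv_mul]
      using (hf' x hx).liminf_right_slope_le hr) ha bound

section Trajectories

variable {E : Type*} [NormedAddCommGroup E] [InnerProductSpace ℝ E]

theorem norm_sq_le_gronwallBound_of_inner_deriv_le {z z' : ℝ → E} {δ K ε a b : ℝ}
    (hz : ∀ t ∈ Icc a b, HasDerivAt z (z' t) t) (ha : ‖z a‖ ^ 2 ≤ δ)
    (bound : ∀ t ∈ Ico a b, 2 * ⟪z t, z' t⟫ ≤ K * ‖z t‖ ^ 2 + ε) :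
    ∀ t ∈ Icc a b, ‖z t‖ ^ 2 ≤ gronwallBound δ K ε (t - a) :=
  le_gronwallBound_of_hasDerivWithinAt
    (fun t ht => (hz t ht).norm_sq.continuousAt.continuousWithinAt)
    (fun t ht => (hz t (Ico_subset_Icc_self ht)).norm_sq.hasDerivWithinAt) ha bound

theorem real_inner_add_le_of_norm_le {w u u' : E} {L D : ℝ} (hu : ‖u‖ ≤ L * ‖w‖)
    (hu' : ‖u'‖ ≤ D) : ⟪w, u + u'⟫ ≤ L * ‖w‖ ^ 2 + D * ‖w‖ :=
  calc ⟪w, u + u'⟫ = ⟪w, u⟫ + ⟪w, u'⟫ := inner_add_right _ _ _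
    _ ≤ ‖w‖ * (L * ‖w‖) + ‖w‖ * D := by
      gcongr <;> exact (real_inner_le_norm _ _).trans (by gcongr)
    _ = L * ‖w‖ ^ 2 + D * ‖w‖ := by ring

theorem norm_sub_sq_le_gronwallBound_of_trajectories {F G : E → E} {s : Set E}
    {y yε : ℝ → E} {L D K δ a b : ℝ}
    (hFLip : ∀ x ∈ s, ∀ x' ∈ s, ‖F x - F x'‖ ≤ L * ‖x - x'‖) (hGF : ∀ x ∈ s, ‖G x - F x‖ ≤ D)
    (hKδ : ∀ r, 0 ≤ r → 2 * (L * r ^ 2 + D * r) ≤ K * r ^ 2 + δ) (ha : y a = yε a)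
    (hys : ∀ t ∈ Icc a b, y t ∈ s) (hyεs : ∀ t ∈ Icc a b, yε t ∈ s)
    (hy : ∀ t ∈ Icc a b, HasDerivAt y (F (y t)) t)
    (hyε : ∀ t ∈ Icc a b, HasDerivAt yε (G (yε t)) t) :
    ∀ t ∈ Icc a b, ‖yε t - y t‖ ^ 2 ≤ gronwallBound 0 K δ (t - a) := by
  refine norm_sq_le_gronwallBound_of_inner_deriv_le (fun t ht => (hyε t ht).sub (hy t ht))
    (by simp [ha]) fun t ht => ?_
  have ht' := Ico_subset_Icc_self ht
  have hsplit : G (yε t) - F (y t) = (F (yε t) - F (y t)) + (G (yε t) - F (yε t)) := by abel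
  rw [hsplit]
  have := real_inner_add_le_of_norm_le (hFLip _ (hyεs t ht') _ (hys t ht')) (hGF _ (hyεs t ht'))
  linarith [hKδ _ (norm_nonneg (yε t - y t))]

end Trajectories

theorem stmt_3_general (d m : ℕ)
    (β ε L C T : ℝ) (hL : 0 ≤ L)
    (B : Matrix (Fin d) (Fin m) ℝ)
    (f : EuclideanSpace ℝ (Fin d) → EuclideanSpace ℝ (Fin d))
    (v vε : EuclideanSpace ℝ (Fin d) → ℝ)
    (Ω : Set (EuclideanSpace ℝ (Fin d)))
    (F Fε : EuclideanSpace ℝ (Fin d) → EuclideanSpace ℝ (Fin d))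
    (hF : F = fun y => f y - β⁻¹ • matVec B (matVec Bᵀ (gradient v y)))
    (hFε : Fε = fun y => f y - β⁻¹ • matVec B (matVec Bᵀ (gradient vε y)))
    (hFLip : ∀ x ∈ Ω, ∀ y ∈ Ω, ‖F x - F y‖ ≤ L * ‖x - y‖)
    (hclose : ∀ y ∈ Ω, ‖matVec Bᵀ (gradient v y) - matVec Bᵀ (gradient vε y)‖ ≤ ε)
    (hC : C = 2 * L + (matOpNorm B) ^ 2 / β ^ 2)
    (y yε : ℝ → EuclideanSpace ℝ (Fin d))
    (hy0 : y 0 = yε 0)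
    (hyΩ : ∀ t ∈ Icc (0:ℝ) T, y t ∈ Ω) (hyεΩ : ∀ t ∈ Icc (0:ℝ) T, yε t ∈ Ω)
    (hy : ∀ t ∈ Icc (0:ℝ) T, HasDerivAt y (F (y t)) t)
    (hyε : ∀ t ∈ Icc (0:ℝ) T, HasDerivAt yε (Fε (yε t)) t) :
    ∀ t ∈ Icc (0:ℝ) T, ‖yε t - y t‖ ^ 2 ≤ ε ^ 2 / C * (Real.exp (C * t) - 1) := by
  intro t ht
  set κ := |β|⁻¹ * matOpNorm B with hκ
  have hgap : ∀ x ∈ Ω, ‖Fε x - F x‖ ≤ κ * ε := fun x hx => by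
    subst hF hFε
    exact (norm_sub_sub_smul_matVec_le B _ β _ _).trans <|
      mul_le_mul_of_nonneg_left (hclose x hx) (mul_nonneg (by positivity) (matOpNorm_nonneg B))
  have hCκ : C = 2 * L + κ ^ 2 := by rw [hC, hκ, mul_pow, inv_pow, sq_abs, div_eq_inv_mul]
  have key := fun K δ hKδ => norm_sub_sq_le_gronwallBound_of_trajectories (a := 0) (K := K)
    (δ := δ) hFLip hgap hKδ hy0 hyΩ hyεΩ hy hyε t ht
  rcases eq_or_ne C 0 with hC0 | hC0
  · -- `C = 0` forces `L = 0` and `κ = 0`; the right-hand side is `0` because `ε² / 0 = 0`.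
    have hL0 : L = 0 := by nlinarith [sq_nonneg κ]
    have hκ0 : κ = 0 := by nlinarith [sq_nonneg κ]
    have := key 0 0 fun r _ => by simp [hL0, hκ0]
    rw [gronwallBound_ε0_δ0] at this
    simpa [hC0] using this
  · have := key C (ε ^ 2) fun r _ => by
      rw [hCκ]
      nlinarith [sq_nonneg (κ * r - ε)]
    simpa [gronwallBound_of_K_ne_0 hC0] using this

/-- Gronwall-type estimate for the difference of two closed-loop
trajectories driven by nearby feedback gradients. -/
theorem stmt_3 (d m : ℕ) (hd : 1 ≤ d) (hm : 1 ≤ m)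
    (l β ε L C T : ℝ) (hl : 0 < l) (hβ : 0 < β) (hε : 0 < ε) (hL : 0 ≤ L) (hT : 0 < T)
    (B : Matrix (Fin d) (Fin m) ℝ)
    (f : EuclideanSpace ℝ (Fin d) → EuclideanSpace ℝ (Fin d))
    (v vε : EuclideanSpace ℝ (Fin d) → ℝ)
    (hv : Differentiable ℝ v) (hvε : Differentiable ℝ vε)
    (Ω : Set (EuclideanSpace ℝ (Fin d)))
    (hΩ : Ω = {y | ∀ i, |y i| ≤ l})
    (F Fε : EuclideanSpace ℝ (Fin d) → EuclideanSpace ℝ (Fin d))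
    (hF : F = fun y => f y - β⁻¹ • matVec B (matVec Bᵀ (gradient v y)))
    (hFε : Fε = fun y => f y - β⁻¹ • matVec B (matVec Bᵀ (gradient vε y)))
    (hFLip : ∀ x ∈ Ω, ∀ y ∈ Ω, ‖F x - F y‖ ≤ L * ‖x - y‖)
    (hclose : ∀ y ∈ Ω, ‖matVec Bᵀ (gradient v y) - matVec Bᵀ (gradient vε y)‖ ≤ ε)
    (hC : C = 2 * L + (matOpNorm B) ^ 2 / β ^ 2)
    (y yε : ℝ → EuclideanSpace ℝ (Fin d))
    (hy0 : y 0 = yε 0)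
    (hyΩ : ∀ t ∈ Icc (0:ℝ) T, y t ∈ Ω) (hyεΩ : ∀ t ∈ Icc (0:ℝ) T, yε t ∈ Ω)
    (hy : ∀ t ∈ Icc (0:ℝ) T, HasDerivAt y (F (y t)) t)
    (hyε : ∀ t ∈ Icc (0:ℝ) T, HasDerivAt yε (Fε (yε t)) t) :
    ∀ t ∈ Icc (0:ℝ) T, ‖yε t - y t‖ ^ 2 ≤ ε ^ 2 / C * (Real.exp (C * t) - 1) :=
  stmt_3_general d m β ε L C T hL B f v vε Ω F Fε hF hFε hFLip hclose hC y yε hy0 hyΩ hyεΩ hy hyε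
end

section
/- Let d, m ≥ 1, l > 0, β > 0, T ∈ (0,∞), B ∈ ℝ^{d×m}, Ω̄ = [−l,l]^d, let f : ℝ^d → ℝ^d be Lipschitz on Ω̄, let ℓ : ℝ^d → ℝ be continuous, and let v, v_1, v_2, … : ℝ^d → ℝ be continuously differentiable with ∇v_k → ∇v uniformly on Ω̄ as k → ∞. Fix y_0 ∈ Ω̄. For each k, let y_k : [0,T] → Ω̄ be differentiable with y_k(0) = y_0 and y_k'(t) = f(y_k(t)) − (1/β) B Bᵀ ∇v_k(y_k(t)) for all t ∈ [0,T]. Let y : [0,T] → Ω̄ satisfy y(0) = y_0 and y'(t) = f(y(t)) − (1/β) B Bᵀ ∇v(y(t)), and assume y is the unique such solution taking values in Ω̄. Then y_k → y uniformly on [0,T], and ∫_0^T (ℓ(y_k(t)) + (1/(2β))|Bᵀ∇v_k(y_k(t))|²) dt → ∫_0^T (ℓ(y(t)) + (1/(2β))|Bᵀ∇v(y(t))|²) dt as k → ∞. -/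
/-!
Along each approximating trajectory the velocity is `F_{v_k}(y_k)`, and `F_{v_k} → F_v` uniformly
on the compact cube, so the trajectories are eventually equi-Lipschitz with values in the cube.
By Arzelà–Ascoli every subsequence has a uniformly convergent further subsequence. Its limit
satisfies the integral equation `z(t) = y₀ + ∫₀ᵗ F_v(z)` (uniform convergence passes under the
integral), hence solves the closed-loop ODE, hence is `y` by uniqueness; so the whole sequence
converges uniformly to `y`. The running costs then converge uniformly along the trajectories,
and so do their integrals.
-/

open Matrix Set Filter

open Metric Topology
open scoped NNReal

section UniformComposition

variable {ι α E F : Type*} {p : Filter ι} {s : Set α} {K : Set E}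

theorem Continuous.comp_tendstoUniformlyOn_of_mapsTo [PseudoMetricSpace E] [ProperSpace E]
    [UniformSpace F] {Φ : E → F} (hΦ : Continuous Φ) (hK : IsCompact K)
    {u : ι → α → E} {w : α → E} (hw : MapsTo w s K) (h : TendstoUniformlyOn u w p s) :
    TendstoUniformlyOn (fun n t => Φ (u n t)) (fun t => Φ (w t)) p s := by
  refine ((hK.cthickening (r := 1)).uniformContinuousOn_of_continuous hΦ.continuousOn
    ).comp_tendstoUniformlyOn_eventually ?_ (fun t ht => self_subset_cthickening K (hw ht)) h
  filter_upwards [Metric.tendstoUniformlyOn_iff.1 h 1 one_pos] with n hn t ht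
  exact mem_cthickening_of_dist_le _ _ _ _ (hw ht) (by rw [dist_comm]; exact (hn t ht).le)

theorem TendstoUniformlyOn.comp_tendstoUniformlyOn_of_mapsTo [UniformSpace E] [UniformSpace F]
    {Gs : ι → E → F} {G : E → F} (hG : TendstoUniformlyOn Gs G p K) (hGc : ContinuousOn G K)
    (hK : IsCompact K) {zs : ι → α → E} {z : α → E} (hzs : ∀ᶠ n in p, MapsTo (zs n) s K)
    (hz : MapsTo z s K) (h : TendstoUniformlyOn zs z p s) :
    TendstoUniformlyOn (fun n t => Gs n (zs n t)) (fun t => G (z t)) p s := by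
  intro u hu
  obtain ⟨V, hV, hVu⟩ := comp_mem_uniformity_sets hu
  have hGz := (hK.uniformContinuousOn_of_continuous hGc).comp_tendstoUniformlyOn_eventually
    hzs hz h
  filter_upwards [hGz V hV, hG V hV, hzs] with n hGzn hGn hzn t ht
  exact hVu (SetRel.prodMk_mem_comp (hGzn t ht) (hGn _ (hzn ht)))

theorem TendstoUniformlyOn.exists_eventually_nnnorm_le [TopologicalSpace E]
    [SeminormedAddCommGroup F] {Gs : ι → E → F} {G : E → F} (hG : TendstoUniformlyOn Gs G p K)
    (hGc : ContinuousOn G K) (hK : IsCompact K) :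
    ∃ C : ℝ≥0, ∀ᶠ n in p, ∀ x ∈ K, ‖Gs n x‖₊ ≤ C := by
  obtain ⟨M, hM⟩ := hK.exists_bound_of_continuousOn hGc
  refine ⟨(M + 1).toNNReal, ?_⟩
  filter_upwards [(uniformContinuous_norm.comp_tendstoUniformlyOn hG).eventually_forall_le
    (lt_add_one M) hM] with n hn x hx
  rw [← NNReal.coe_le_coe, coe_nnnorm, Real.coe_toNNReal']
  exact le_max_of_le_left (hn x hx)

end UniformComposition

theorem isCompact_setOf_lipschitzWith_forall_mem {X E : Type*} [PseudoMetricSpace X]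
    [CompactSpace X] [MetricSpace E] (C : ℝ≥0) {K : Set E} (hK : IsCompact K) :
    IsCompact {g : C(X, E) | LipschitzWith C g ∧ ∀ x, g x ∈ K} := by
  refine ArzelaAscoli.isCompact_of_equicontinuous _ ?_ ?_
  · have himage : ContinuousMap.toFun '' {g : C(X, E) | LipschitzWith C g ∧ ∀ x, g x ∈ K} =
        {g : X → E | LipschitzWith C g} ∩ univ.pi fun _ => K := by
      ext g
      refine ⟨?_, fun hg => ⟨⟨g, hg.1.continuous⟩, ⟨hg.1, fun x => hg.2 x trivial⟩, rfl⟩⟩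
      rintro ⟨g, hg, rfl⟩
      exact ⟨hg.1, fun x _ => hg.2 x⟩
    rw [himage]
    exact (isCompact_univ_pi fun _ => hK).inter_left (isClosed_setOfPred_lipschitzWith C)
  · exact (LipschitzWith.uniformEquicontinuous _ C fun g => g.2.1).equicontinuous

section AutonomousODE

variable {E : Type*} [NormedAddCommGroup E] [NormedSpace ℝ E] [CompleteSpace E]
  {K : Set E} {F : E → E} {T : ℝ} {z : ℝ → E}

theorem eq_add_integral_of_hasDerivAt (hF : ContinuousOn F K) (hzK : MapsTo z (Icc 0 T) K)
    (hz : ∀ t ∈ Icc 0 T, HasDerivAt z (F (z t)) t) {t : ℝ} (ht : t ∈ Icc 0 T) :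
    z t = z 0 + ∫ s in 0..t, F (z s) := by
  have hsub : uIcc 0 t ⊆ Icc 0 T := uIcc_subset_Icc (left_mem_Icc.2 (ht.1.trans ht.2)) ht
  have hzc : ContinuousOn z (Icc 0 T) := fun s hs => (hz s hs).continuousAt.continuousWithinAt
  rw [intervalIntegral.integral_eq_sub_of_hasDerivAt (fun s hs => hz s (hsub hs))
    ((hF.comp hzc hzK).mono hsub).intervalIntegrable]
  abel

theorem exists_hasDerivAt_eqOn_of_eq_add_integral (hT : 0 ≤ T) (hF : ContinuousOn F K)
    (hzc : ContinuousOn z (Icc 0 T)) (hzK : MapsTo z (Icc 0 T) K)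
    (hz : ∀ t ∈ Icc 0 T, z t = z 0 + ∫ s in 0..t, F (z s)) :
    ∃ w : ℝ → E, EqOn w z (Icc 0 T) ∧ ∀ t ∈ Icc 0 T, HasDerivAt w (F (w t)) t := by
  -- `HasDerivAt` at the endpoints of `[0, T]` is two-sided, so integrate the constant extension
  -- of `z` beyond `[0, T]`.
  set z' := IccExtend hT ((Icc 0 T).domRestrict z)
  have hz' : EqOn z' z (Icc 0 T) := fun t ht => IccExtend_of_mem hT _ ht
  have hFz' : Continuous fun t => F (z' t) :=
    hF.comp_continuous (continuous_IccExtend_iff.2 hzc.domRestrict)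
      fun t => hzK (projIcc 0 T hT t).2
  set w := fun t => z 0 + ∫ s in 0..t, F (z' s)
  have hwz : EqOn w z (Icc 0 T) := by
    intro t ht
    have hsub : uIcc 0 t ⊆ Icc 0 T := uIcc_subset_Icc (left_mem_Icc.2 (ht.1.trans ht.2)) ht
    rw [hz t ht]
    simp only [w, intervalIntegral.integral_congr fun s hs => congrArg F (hz' (hsub hs))]
  refine ⟨w, hwz, fun t ht => ?_⟩
  rw [hwz ht, ← hz' ht]
  exact ((hFz'.integral_hasStrictDerivAt 0 t).hasDerivAt).const_add (z 0)

theorem eq_add_integral_of_tendstoUniformlyOn {ι : Type*} {p : Filter ι} [p.NeBot]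
    [p.IsCountablyGenerated] {Fs : ι → E → E} {zs : ι → ℝ → E} (hK : IsCompact K)
    (hF : ContinuousOn F K) (hFs : ∀ n, ContinuousOn (Fs n) K)
    (hconv : TendstoUniformlyOn Fs F p K) (hzsK : ∀ n, MapsTo (zs n) (Icc 0 T) K)
    (hzs : ∀ n, ∀ t ∈ Icc 0 T, HasDerivAt (zs n) (Fs n (zs n t)) t)
    (hlim : TendstoUniformlyOn zs z p (Icc 0 T)) :
    MapsTo z (Icc 0 T) K ∧ ∀ t ∈ Icc 0 T, z t = z 0 + ∫ s in 0..t, F (z s) := by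
  have hzK : MapsTo z (Icc 0 T) K := fun t ht =>
    hK.isClosed.mem_of_tendsto (hlim.tendsto_at ht) (.of_forall fun n => hzsK n ht)
  refine ⟨hzK, fun t ht => tendsto_nhds_unique (hlim.tendsto_at ht) ?_⟩
  have h0 : (0 : ℝ) ∈ Icc 0 T := left_mem_Icc.2 (ht.1.trans ht.2)
  have hsub : uIcc 0 t ⊆ Icc 0 T := uIcc_subset_Icc h0 ht
  have hint : Tendsto (fun n => ∫ s in 0..t, Fs n (zs n s)) p (𝓝 (∫ s in 0..t, F (z s))) := by
    refine TendstoUniformlyOn.tendsto_intervalIntegral_of_continuousOn (.of_forall fun n => ?_)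
      ((hconv.comp_tendstoUniformlyOn_of_mapsTo hF hK (.of_forall hzsK) hzK hlim).mono hsub)
    have hzsc : ContinuousOn (zs n) (Icc 0 T) := fun s hs =>
      (hzs n s hs).continuousAt.continuousWithinAt
    exact ((hFs n).comp hzsc (hzsK n)).mono hsub
  refine ((hlim.tendsto_at h0).add hint).congr fun n => ?_
  exact (eq_add_integral_of_hasDerivAt (hFs n) (hzsK n) (hzs n) ht).symm

theorem tendstoUniformlyOn_of_unique_solution (hT : 0 ≤ T) (hK : IsCompact K)
    {Fs : ℕ → E → E} (hFs : ∀ n, ContinuousOn (Fs n) K) (hconv : TendstoUniformlyOn Fs F atTop K)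
    {y₀ : E} {ys : ℕ → ℝ → E} (hys₀ : ∀ n, ys n 0 = y₀) (hysK : ∀ n, MapsTo (ys n) (Icc 0 T) K)
    (hys : ∀ n, ∀ t ∈ Icc 0 T, HasDerivAt (ys n) (Fs n (ys n t)) t)
    {y : ℝ → E} (hyc : ContinuousOn y (Icc 0 T))
    (huniq : ∀ z : ℝ → E, z 0 = y₀ → (∀ t ∈ Icc 0 T, z t ∈ K) →
      (∀ t ∈ Icc 0 T, HasDerivAt z (F (z t)) t) → ∀ t ∈ Icc 0 T, z t = y t) :
    TendstoUniformlyOn ys y atTop (Icc 0 T) := by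
  have hF : ContinuousOn F K := hconv.continuousOn (.of_forall hFs)
  obtain ⟨C, hC⟩ := hconv.exists_eventually_nnnorm_le hF hK
  have hysc : ∀ n, ContinuousOn (ys n) (Icc 0 T) := fun n t ht =>
    (hys n t ht).continuousAt.continuousWithinAt
  let Y : ℕ → C(Icc 0 T, E) := fun n => ⟨(Icc 0 T).domRestrict (ys n), (hysc n).domRestrict⟩
  rw [tendstoUniformlyOn_iff_tendstoUniformly_comp_coe]
  refine ContinuousMap.tendsto_iff_tendstoUniformly.1
    (?_ : Tendsto Y atTop (𝓝 ⟨(Icc 0 T).domRestrict y, hyc.domRestrict⟩))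
  refine (isCompact_setOf_lipschitzWith_forall_mem C hK).tendsto_nhds_of_unique_mapClusterPt ?_ ?_
  · filter_upwards [hC] with n hn
    refine ⟨?_, fun t => hysK n t.2⟩
    exact ((convex_Icc 0 T).lipschitzOnWith_of_nnnorm_hasDerivWithin_le
      (fun t ht => (hys n t ht).hasDerivWithinAt) fun t ht => hn _ (hysK n ht)).to_restrict
  rintro Z - hZ
  obtain ⟨φ, hφ, hYZ⟩ := hZ.tendsto_subseq
  set z := IccExtend hT Z
  have hlim : TendstoUniformlyOn ys z (map φ atTop) (Icc 0 T) := by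
    rw [tendstoUniformlyOn_iff_tendstoUniformly_comp_coe, show z ∘ (↑) = Z from
      funext (IccExtend_val hT Z)]
    exact ContinuousMap.tendsto_iff_tendstoUniformly.1 hYZ
  obtain ⟨hzK, hz⟩ := eq_add_integral_of_tendstoUniformlyOn hK hF hFs
    (fun u hu => hφ.tendsto_atTop (hconv u hu)) hysK hys hlim
  obtain ⟨w, hwz, hw⟩ := exists_hasDerivAt_eqOn_of_eq_add_integral hT hF
    (continuous_IccExtend_iff.2 Z.continuous).continuousOn hzK hz
  have hw₀ : w 0 = y₀ := by
    have h0 : (0 : ℝ) ∈ Icc 0 T := left_mem_Icc.2 hT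
    rw [hwz h0]
    refine tendsto_nhds_unique (hlim.tendsto_at h0) ?_
    simpa only [hys₀] using tendsto_const_nhds
  have hwy := huniq w hw₀ (fun t ht => hwz ht ▸ hzK ht) hw
  ext t
  simpa [z, hwz t.2] using hwy t t.2

end AutonomousODE

theorem isCompact_setOf_forall_abs_le {ι : Type*} [Fintype ι] (l : ℝ) :
    IsCompact {y : EuclideanSpace ℝ ι | ∀ i, |y i| ≤ l} := by
  have hcube : {y : EuclideanSpace ℝ ι | ∀ i, |y i| ≤ l} =
      EuclideanSpace.equiv ι ℝ ⁻¹' univ.pi fun _ => Icc (-l) l := by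
    ext y
    simp only [mem_ofPred_eq, mem_preimage, mem_univ_pi, mem_Icc, abs_le]
    rfl
  rw [hcube]
  exact (EuclideanSpace.equiv ι ℝ).toHomeomorph.isCompact_preimage.2
    (isCompact_univ_pi fun _ => isCompact_Icc)

theorem ContDiff.continuous_gradient {F : Type*} [NormedAddCommGroup F] [InnerProductSpace ℝ F]
    [CompleteSpace F] {w : F → ℝ} (hw : ContDiff ℝ 1 w) : Continuous (gradient w) :=
  (InnerProductSpace.toDual ℝ F).symm.continuous.comp (hw.continuous_fderiv one_ne_zero)

section ClosedLoop

variable {d m : ℕ} {f : EuclideanSpace ℝ (Fin d) → EuclideanSpace ℝ (Fin d)}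
  {ℓ : EuclideanSpace ℝ (Fin d) → ℝ} {B : Matrix (Fin d) (Fin m) ℝ} {β : ℝ}
  {v : EuclideanSpace ℝ (Fin d) → ℝ} {ι : Type*} {vs : ι → EuclideanSpace ℝ (Fin d) → ℝ}
  {p : Filter ι} {K : Set (EuclideanSpace ℝ (Fin d))}

noncomputable def closedLoopField (f : EuclideanSpace ℝ (Fin d) → EuclideanSpace ℝ (Fin d))
    (B : Matrix (Fin d) (Fin m) ℝ) (β : ℝ) (w : EuclideanSpace ℝ (Fin d) → ℝ) :
    EuclideanSpace ℝ (Fin d) → EuclideanSpace ℝ (Fin d) :=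
  fun y => f y - β⁻¹ • matVec B (matVec Bᵀ (gradient w y))

noncomputable def runningCost (ℓ : EuclideanSpace ℝ (Fin d) → ℝ) (B : Matrix (Fin d) (Fin m) ℝ)
    (β : ℝ) (w : EuclideanSpace ℝ (Fin d) → ℝ) : EuclideanSpace ℝ (Fin d) → ℝ :=
  fun y => ℓ y + 1 / (2 * β) * ‖matVec Bᵀ (gradient w y)‖ ^ 2

theorem uniformContinuous_matVec {n k : ℕ} (A : Matrix (Fin n) (Fin k) ℝ) :
    UniformContinuous (matVec A) :=
  (LinearMap.toContinuousLinearMap (Matrix.toEuclideanLin A)).uniformContinuous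

theorem uniformContinuous_feedback (B : Matrix (Fin d) (Fin m) ℝ) (β : ℝ) :
    UniformContinuous fun x => β⁻¹ • matVec B (matVec Bᵀ x) :=
  ((uniformContinuous_matVec B).comp (uniformContinuous_matVec Bᵀ)).const_smul β⁻¹

theorem ContinuousOn.closedLoopField (hf : ContinuousOn f K) (hw : ContDiff ℝ 1 v) :
    ContinuousOn (closedLoopField f B β v) K :=
  hf.sub ((uniformContinuous_feedback B β).continuous.comp hw.continuous_gradient).continuousOn

theorem tendstoUniformlyOn_closedLoopField
    (h : TendstoUniformlyOn (fun k => gradient (vs k)) (gradient v) p K) :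
    TendstoUniformlyOn (fun k => closedLoopField f B β (vs k)) (closedLoopField f B β v) p K := by
  have hfeedback : TendstoUniformlyOn (fun k y => β⁻¹ • matVec B (matVec Bᵀ (gradient (vs k) y)))
      (fun y => β⁻¹ • matVec B (matVec Bᵀ (gradient v y))) p K :=
    (uniformContinuous_feedback B β).comp_tendstoUniformlyOn h
  rw [Metric.tendstoUniformlyOn_iff] at hfeedback ⊢
  simpa only [closedLoopField, dist_sub_left] using hfeedback

theorem continuous_runningCost (hℓ : Continuous ℓ) (hw : ContDiff ℝ 1 v) :
    Continuous (runningCost ℓ B β v) :=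
  hℓ.add (continuous_const.mul
    (((uniformContinuous_matVec Bᵀ).continuous.comp hw.continuous_gradient).norm.pow 2))

theorem tendstoUniformlyOn_runningCost (hw : ContDiff ℝ 1 v) (hK : IsCompact K)
    (h : TendstoUniformlyOn (fun k => gradient (vs k)) (gradient v) p K) :
    TendstoUniformlyOn (fun k => runningCost ℓ B β (vs k)) (runningCost ℓ B β v) p K := by
  have hquad : Continuous fun x => 1 / (2 * β) * ‖matVec Bᵀ x‖ ^ 2 :=
    continuous_const.mul ((uniformContinuous_matVec Bᵀ).continuous.norm.pow 2)
  have hquad_conv := hquad.comp_tendstoUniformlyOn_of_mapsTo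
    (hK.image hw.continuous_gradient) (mapsTo_image _ K) h
  exact TendstoUniformlyOn.add (fun u hu => .of_forall fun _ _ _ => refl_mem_uniformity hu)
    hquad_conv

end ClosedLoop

theorem stmt_7_general (d m : ℕ)
    (l β T : ℝ) (hT : 0 < T)
    (B : Matrix (Fin d) (Fin m) ℝ)
    (Ω : Set (EuclideanSpace ℝ (Fin d)))
    (hΩ : Ω = {y | ∀ i, |y i| ≤ l})
    (f : EuclideanSpace ℝ (Fin d) → EuclideanSpace ℝ (Fin d))
    (Lf : ℝ) (hfLip : ∀ x ∈ Ω, ∀ y ∈ Ω, ‖f x - f y‖ ≤ Lf * ‖x - y‖)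
    (ℓ : EuclideanSpace ℝ (Fin d) → ℝ) (hℓ : Continuous ℓ)
    (v : EuclideanSpace ℝ (Fin d) → ℝ) (vs : ℕ → EuclideanSpace ℝ (Fin d) → ℝ)
    (hv : ContDiff ℝ 1 v) (hvs : ∀ k, ContDiff ℝ 1 (vs k))
    (hgradconv : TendstoUniformlyOn (fun k y => gradient (vs k) y) (fun y => gradient v y)
      atTop Ω)
    (y0 : EuclideanSpace ℝ (Fin d))
    (ys : ℕ → ℝ → EuclideanSpace ℝ (Fin d)) (y : ℝ → EuclideanSpace ℝ (Fin d))
    (hys0 : ∀ k, ys k 0 = y0)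
    (hysΩ : ∀ k, ∀ t ∈ Icc (0:ℝ) T, ys k t ∈ Ω)
    (hysode : ∀ k, ∀ t ∈ Icc (0:ℝ) T,
      HasDerivAt (ys k) (f (ys k t) - β⁻¹ • matVec B (matVec Bᵀ (gradient (vs k) (ys k t)))) t)
    (hyΩ : ∀ t ∈ Icc (0:ℝ) T, y t ∈ Ω)
    (hyode : ∀ t ∈ Icc (0:ℝ) T,
      HasDerivAt y (f (y t) - β⁻¹ • matVec B (matVec Bᵀ (gradient v (y t)))) t)
    (huniq : ∀ z : ℝ → EuclideanSpace ℝ (Fin d), z 0 = y0 →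
      (∀ t ∈ Icc (0:ℝ) T, z t ∈ Ω) →
      (∀ t ∈ Icc (0:ℝ) T,
        HasDerivAt z (f (z t) - β⁻¹ • matVec B (matVec Bᵀ (gradient v (z t)))) t) →
      ∀ t ∈ Icc (0:ℝ) T, z t = y t) :
    TendstoUniformlyOn (fun k t => ys k t) y atTop (Icc 0 T) ∧
    Tendsto (fun k => ∫ t in (0:ℝ)..T,
        (ℓ (ys k t) + 1 / (2 * β) * ‖matVec Bᵀ (gradient (vs k) (ys k t))‖ ^ 2)) atTop
      (nhds (∫ t in (0:ℝ)..T,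
        (ℓ (y t) + 1 / (2 * β) * ‖matVec Bᵀ (gradient v (y t))‖ ^ 2))) := by
  have hΩc : IsCompact Ω := hΩ ▸ isCompact_setOf_forall_abs_le l
  have hfc : ContinuousOn f Ω := (LipschitzOnWith.of_dist_le' fun x hx z hz => by
    simpa only [dist_eq_norm] using hfLip x hx z hz).continuousOn
  have hgrad : TendstoUniformlyOn (fun k => gradient (vs k)) (gradient v) atTop Ω := hgradconv
  have hysc : ∀ k, ContinuousOn (ys k) (Icc 0 T) := fun k t ht =>
    (hysode k t ht).continuousAt.continuousWithinAt
  have hyc : ContinuousOn y (Icc 0 T) := fun t ht => (hyode t ht).continuousAt.continuousWithinAt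
  have hys_lim : TendstoUniformlyOn ys y atTop (Icc 0 T) :=
    tendstoUniformlyOn_of_unique_solution hT.le hΩc (fun k => hfc.closedLoopField (hvs k))
      (tendstoUniformlyOn_closedLoopField hgrad) hys0 hysΩ hysode hyc huniq
  refine ⟨hys_lim, ?_⟩
  have hcost := (tendstoUniformlyOn_runningCost (ℓ := ℓ) (B := B) (β := β) hv hΩc hgrad
    ).comp_tendstoUniformlyOn_of_mapsTo (continuous_runningCost hℓ hv).continuousOn hΩc
    (.of_forall hysΩ) hyΩ hys_lim
  rw [← uIcc_of_le hT.le] at hcost hysc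
  exact hcost.tendsto_intervalIntegral_of_continuousOn
    (.of_forall fun k => (continuous_runningCost hℓ (hvs k)).comp_continuousOn (hysc k))

/-- continuity of finite-horizon closed-loop trajectories and costs with
respect to `C¹` perturbations of the feedback potential. -/
theorem stmt_7 (d m : ℕ) (hd : 1 ≤ d) (hm : 1 ≤ m)
    (l β T : ℝ) (hl : 0 < l) (hβ : 0 < β) (hT : 0 < T)
    (B : Matrix (Fin d) (Fin m) ℝ)
    (Ω : Set (EuclideanSpace ℝ (Fin d)))
    (hΩ : Ω = {y | ∀ i, |y i| ≤ l})
    (f : EuclideanSpace ℝ (Fin d) → EuclideanSpace ℝ (Fin d))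
    (Lf : ℝ) (hfLip : ∀ x ∈ Ω, ∀ y ∈ Ω, ‖f x - f y‖ ≤ Lf * ‖x - y‖)
    (ℓ : EuclideanSpace ℝ (Fin d) → ℝ) (hℓ : Continuous ℓ)
    (v : EuclideanSpace ℝ (Fin d) → ℝ) (vs : ℕ → EuclideanSpace ℝ (Fin d) → ℝ)
    (hv : ContDiff ℝ 1 v) (hvs : ∀ k, ContDiff ℝ 1 (vs k))
    (hgradconv : TendstoUniformlyOn (fun k y => gradient (vs k) y) (fun y => gradient v y)
      atTop Ω)
    (y0 : EuclideanSpace ℝ (Fin d)) (hy0 : y0 ∈ Ω)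
    (ys : ℕ → ℝ → EuclideanSpace ℝ (Fin d)) (y : ℝ → EuclideanSpace ℝ (Fin d))
    (hys0 : ∀ k, ys k 0 = y0)
    (hysΩ : ∀ k, ∀ t ∈ Icc (0:ℝ) T, ys k t ∈ Ω)
    (hysode : ∀ k, ∀ t ∈ Icc (0:ℝ) T,
      HasDerivAt (ys k) (f (ys k t) - β⁻¹ • matVec B (matVec Bᵀ (gradient (vs k) (ys k t)))) t)
    (hy0' : y 0 = y0)
    (hyΩ : ∀ t ∈ Icc (0:ℝ) T, y t ∈ Ω)
    (hyode : ∀ t ∈ Icc (0:ℝ) T,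
      HasDerivAt y (f (y t) - β⁻¹ • matVec B (matVec Bᵀ (gradient v (y t)))) t)
    (huniq : ∀ z : ℝ → EuclideanSpace ℝ (Fin d), z 0 = y0 →
      (∀ t ∈ Icc (0:ℝ) T, z t ∈ Ω) →
      (∀ t ∈ Icc (0:ℝ) T,
        HasDerivAt z (f (z t) - β⁻¹ • matVec B (matVec Bᵀ (gradient v (z t)))) t) →
      ∀ t ∈ Icc (0:ℝ) T, z t = y t) :
    TendstoUniformlyOn (fun k t => ys k t) y atTop (Icc 0 T) ∧
    Tendsto (fun k => ∫ t in (0:ℝ)..T,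
        (ℓ (ys k t) + 1 / (2 * β) * ‖matVec Bᵀ (gradient (vs k) (ys k t))‖ ^ 2)) atTop
      (nhds (∫ t in (0:ℝ)..T,
        (ℓ (y t) + 1 / (2 * β) * ‖matVec Bᵀ (gradient v (y t))‖ ^ 2))) :=
  stmt_7_general d m l β T hT B Ω hΩ f Lf hfLip ℓ hℓ v vs hv hvs hgradconv y0 ys y hys0 hysΩ hysode
    hyΩ hyode huniq
end
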